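/- arXiv:2601.10523 — 2 statements merged into one kernel-verified Lean document; each statement's English description precedes it below -/
import Mathlib

section
/- (Yang's second type inequality for the discrete Schrödinger operator) With the same setup as the discrete Dirichlet Schrödinger problem on a finite set Ω ⊂ ℤⁿ, for any 1 ≤ k ≤ |Ω| − 1: λ_{k+1} ( 1 − (ρ_max/k) Σ_{i=1}^k λ_i ) ≤ (1/k)(1 + 4ρ_max/(n ρ_min)) Σ_{i=1}^k λ_i − (ρ_max/k) Σ_{i=1}^k λ_i². -/
/-!
Yang's inequality comes from an abstract commutator estimate. Let `T` be a symmetric operator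
with orthonormal eigenbasis `T bᵢ = λᵢ bᵢ`, let `M` be symmetric, and let `Λ` separate the
eigenvalues indexed by `s` from the others. For `i ∈ s` the part of `M bᵢ` orthogonal to the
`bⱼ`, `j ∈ s`, is a trial vector for the min-max principle, and Cauchy–Schwarz against `⁅T, M⁆ bᵢ`
gives `(Λ - λᵢ) ⟪⁅T, M⁆ bᵢ, M bᵢ⟫ ≤ ‖⁅T, M⁆ bᵢ‖²` up to cross terms; these cancel in pairs after
summing over `i ∈ s`, because `⟪bⱼ, ⁅T, M⁆ bᵢ⟫ = (λⱼ - λᵢ) ⟪bⱼ, M bᵢ⟫` is antisymmetric.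

On the lattice, `T = ρ⁻¹ (-Δ + V)` with the Dirichlet condition and `M` is multiplication by the
coordinate `x_α`, so `⁅T, M⁆ u = (u (x - e_α) - u (x + e_α)) / (2n ρ)`. Summed over `α`, the
left side is `n ∑ u² - E(u)/2 ≥ 1/(2ρ_max) - λ/2` and the right side is at most
`4 E(u) / (2n ρ_min) ≤ 2λ / (n ρ_min)`, where `E(u) ≤ λ` is the Dirichlet energy of `u`.
-/

open Finset

/-- Adjacency indicator on the integer lattice `ℤⁿ`: `μ x y = 1` iff `x` and `y`
are at `ℓ¹`-distance `1`. -/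
def mu (n : ℕ) (x y : Fin n → ℤ) : ℝ :=
  if (∑ i, |x i - y i|) = 1 then 1 else 0

/-- Every vertex of `ℤⁿ` has degree `2n`. -/
def deg (n : ℕ) : ℝ := 2 * n

/-- The normalized Laplacian on `ℤⁿ`: `Δf(x) = (1/(2n)) ∑_{y∼x} (f(y) - f(x))`. -/
noncomputable def lap (n : ℕ) (f : (Fin n → ℤ) → ℝ) (x : Fin n → ℤ) : ℝ :=
  (1 / deg n) * ∑ᶠ y, mu n x y * (f y - f x)

/-- The carré du champ operator on `ℤⁿ`:
`Γ(f,g)(x) = (1/(2 d_x)) ∑_y μ_{xy} (f(y)-f(x))(g(y)-g(x))`. -/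
noncomputable def gam (n : ℕ) (f g : (Fin n → ℤ) → ℝ) (x : Fin n → ℤ) : ℝ :=
  (1 / (2 * deg n)) * ∑ᶠ y, mu n x y * (f y - f x) * (g y - g x)

/-- The `α`-th coordinate function on `ℤⁿ`. -/
def coord {n : ℕ} (α : Fin n) (x : Fin n → ℤ) : ℝ := x α

open scoped RealInnerProductSpace

section AbstractYang

variable {E : Type*} [NormedAddCommGroup E] [InnerProductSpace ℝ E]

theorem OrthonormalBasis.mul_norm_sq_le_inner_map_self {ι : Type*} [Fintype ι]
    (b : OrthonormalBasis ι ℝ E) {T : E →ₗ[ℝ] E} {lam : ι → ℝ}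
    (hb : ∀ j, T (b j) = lam j • b j) {Λ : ℝ} {φ : E}
    (hφ : ∀ j, ⟪b j, φ⟫ ≠ 0 → Λ ≤ lam j) : Λ * ‖φ‖ ^ 2 ≤ ⟪T φ, φ⟫ := by
  have hTφ : ⟪T φ, φ⟫ = ∑ j, lam j * ⟪b j, φ⟫ ^ 2 := by
    nth_rewrite 1 [← b.sum_repr' φ]
    simp only [map_sum, map_smul, hb, sum_inner, real_inner_smul_left]
    exact sum_congr rfl fun j _ => by ring
  rw [← b.sum_sq_inner_right φ, mul_sum, hTφ]
  refine sum_le_sum fun j _ => ?_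
  by_cases h : ⟪b j, φ⟫ = 0
  · simp [h]
  · exact mul_le_mul_of_nonneg_right (hφ j h) (sq_nonneg _)

lemma mul_le_sq_of_le_mul_of_mul_sq_le {t p r f : ℝ} (ht : 0 ≤ t) (hr : 0 ≤ r) (hf : 0 ≤ f)
    (hp : p ≤ r * f) (htp : t * f ^ 2 ≤ p) : t * p ≤ r ^ 2 := by
  have htf : t * f ≤ r := by
    rcases hf.eq_or_lt with rfl | hf
    · simpa using hr
    · nlinarith
  nlinarith [mul_le_mul_of_nonneg_left hp ht, mul_le_mul_of_nonneg_left htf hr]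

theorem Orthonormal.mul_inner_le_norm_sq_sub_sum {ι : Type*} {v : ι → E} (hv : Orthonormal ℝ v)
    {s : Finset ι} {φ W : E} (hφ : ∀ j ∈ s, ⟪v j, φ⟫ = 0) {t : ℝ} (ht : 0 ≤ t)
    (h : t * ‖φ‖ ^ 2 ≤ ⟪W, φ⟫) : t * ⟪W, φ⟫ ≤ ‖W‖ ^ 2 - ∑ j ∈ s, ⟪v j, W⟫ ^ 2 := by
  obtain ⟨R, hRdef⟩ : ∃ R, R = W - ∑ j ∈ s, ⟪v j, W⟫ • v j := ⟨_, rfl⟩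
  have hRv : ∀ j ∈ s, ⟪v j, R⟫ = 0 := fun j hj => by
    rw [hRdef, inner_sub_right, hv.inner_right_sum _ hj, sub_self]
  have hRφ : ⟪R, φ⟫ = ⟪W, φ⟫ := by
    rw [hRdef, inner_sub_left, sum_inner, sum_eq_zero fun j hj => by
      rw [real_inner_smul_left, hφ j hj, mul_zero], sub_zero]
  have hR : ‖R‖ ^ 2 = ‖W‖ ^ 2 - ∑ j ∈ s, ⟪v j, W⟫ ^ 2 := by
    have hRR : ⟪R, R⟫ = ⟪R, W⟫ := by
      nth_rewrite 2 [hRdef]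
      rw [inner_sub_right, inner_sum, sum_eq_zero fun j hj => by
        rw [real_inner_smul_right, ← real_inner_comm R, hRv j hj, mul_zero], sub_zero]
    rw [← real_inner_self_eq_norm_sq, hRR, hRdef, inner_sub_left, real_inner_self_eq_norm_sq,
      sum_inner]
    simp only [real_inner_smul_left, sq]
  rw [← hR]
  rw [← hRφ] at h ⊢
  exact mul_le_sq_of_le_mul_of_mul_sq_le ht (norm_nonneg _) (norm_nonneg _)
    (real_inner_le_norm R φ) h

lemma sum_sum_gap_mul_sub_sq_nonpos {ι : Type*} (s : Finset ι) (lam : ι → ℝ) (Λ : ℝ)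
    {a β : ι → ι → ℝ} (ha : ∀ i j, a i j = a j i) (hβ : ∀ i j, β i j = (lam j - lam i) * a i j) :
    ∑ i ∈ s, ∑ j ∈ s, ((Λ - lam i) * (a i j * β i j) - β i j ^ 2) ≤ 0 := by
  set f : ι → ι → ℝ := fun i j => (Λ - lam i) * (a i j * β i j) - β i j ^ 2
  have hpair : ∀ i j, f i j + f j i = -β i j ^ 2 := fun i j => by
    simp only [f, hβ, ha j i]; ring
  have h2 : 2 * ∑ i ∈ s, ∑ j ∈ s, f i j = ∑ i ∈ s, ∑ j ∈ s, -β i j ^ 2 := by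
    rw [two_mul]
    nth_rewrite 2 [sum_comm]
    rw [← sum_add_distrib]
    exact sum_congr rfl fun i _ => by
      rw [← sum_add_distrib]; exact sum_congr rfl fun j _ => hpair i j
  have h3 : ∑ i ∈ s, ∑ j ∈ s, -β i j ^ 2 ≤ 0 :=
    sum_nonpos fun i _ => sum_nonpos fun j _ => neg_nonpos.2 (sq_nonneg _)
  linarith

variable {ι : Type*} [Fintype ι] (b : OrthonormalBasis ι ℝ E) {T : E →ₗ[ℝ] E} {lam : ι → ℝ}
  {s : Finset ι} {Λ : ℝ}

theorem OrthonormalBasis.gap_mul_inner_le (hb : ∀ j, T (b j) = lam j • b j)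
    (hsc : ∀ j ∉ s, Λ ≤ lam j) {X W : E} {μ : ℝ} (hμ : μ ≤ Λ) (hX : T X = μ • X + W) :
    (Λ - μ) * (⟪W, X⟫ - ∑ j ∈ s, ⟪b j, X⟫ * ⟪b j, W⟫) ≤ ‖W‖ ^ 2 - ∑ j ∈ s, ⟪b j, W⟫ ^ 2 := by
  obtain ⟨φ, hφdef⟩ : ∃ φ, φ = X - ∑ j ∈ s, ⟪b j, X⟫ • b j := ⟨_, rfl⟩
  have hφ : ∀ j ∈ s, ⟪b j, φ⟫ = 0 := fun j hj => by
    rw [hφdef, inner_sub_right, b.orthonormal.inner_right_sum _ hj, sub_self]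
  have hXφ : ⟪X, φ⟫ = ‖φ‖ ^ 2 := by
    rw [← real_inner_self_eq_norm_sq]
    nth_rewrite 2 [hφdef]
    rw [inner_sub_left, sum_inner, sum_eq_zero fun j hj => by
      rw [real_inner_smul_left, hφ j hj, mul_zero], sub_zero]
  have hTφ : ⟪T φ, φ⟫ = μ * ‖φ‖ ^ 2 + ⟪W, φ⟫ := by
    rw [hφdef, map_sub, hX, map_sum, inner_sub_left, sum_inner, ← hφdef,
      sum_eq_zero fun j hj => by
        rw [map_smul, hb, real_inner_smul_left, real_inner_smul_left, hφ j hj, mul_zero, mul_zero],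
      sub_zero, inner_add_left, real_inner_smul_left, hXφ]
  have hmin : Λ * ‖φ‖ ^ 2 ≤ ⟪T φ, φ⟫ := b.mul_norm_sq_le_inner_map_self hb fun j hj =>
    hsc j fun hjs => hj (hφ j hjs)
  have hWφ : ⟪W, φ⟫ = ⟪W, X⟫ - ∑ j ∈ s, ⟪b j, X⟫ * ⟪b j, W⟫ := by
    rw [hφdef, inner_sub_right, inner_sum]
    simp only [real_inner_smul_right, real_inner_comm W]
  rw [← hWφ]
  exact b.orthonormal.mul_inner_le_norm_sq_sub_sum hφ (sub_nonneg.2 hμ)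
    (by rw [sub_mul]; linarith)

theorem OrthonormalBasis.sum_gap_mul_inner_lie_le (hb : ∀ j, T (b j) = lam j • b j)
    {M : E →ₗ[ℝ] E} (hT : T.IsSymmetric) (hM : M.IsSymmetric) (hs : ∀ i ∈ s, lam i ≤ Λ)
    (hsc : ∀ j ∉ s, Λ ≤ lam j) :
    ∑ i ∈ s, (Λ - lam i) * ⟪⁅T, M⁆ (b i), M (b i)⟫ ≤ ∑ i ∈ s, ‖⁅T, M⁆ (b i)‖ ^ 2 := by
  have hlie : ∀ i, ⁅T, M⁆ (b i) = T (M (b i)) - lam i • M (b i) := fun i => by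
    rw [Ring.lie_def, LinearMap.sub_apply, Module.End.mul_apply, Module.End.mul_apply, hb,
      map_smul]
  have hX : ∀ i, T (M (b i)) = lam i • M (b i) + ⁅T, M⁆ (b i) := fun i => by
    rw [hlie]; abel
  have hβ : ∀ i j, ⟪b j, ⁅T, M⁆ (b i)⟫ = (lam j - lam i) * ⟪b j, M (b i)⟫ := fun i j => by
    rw [hlie, inner_sub_right, ← hT, hb, real_inner_smul_left, real_inner_smul_right]; ring
  have ha : ∀ i j, ⟪b j, M (b i)⟫ = ⟪b i, M (b j)⟫ := fun i j => by
    rw [← hM, real_inner_comm]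
  have hper : ∀ i ∈ s, (Λ - lam i) * ⟪⁅T, M⁆ (b i), M (b i)⟫ ≤ ‖⁅T, M⁆ (b i)‖ ^ 2 +
      ∑ j ∈ s, ((Λ - lam i) * (⟪b j, M (b i)⟫ * ⟪b j, ⁅T, M⁆ (b i)⟫) -
        ⟪b j, ⁅T, M⁆ (b i)⟫ ^ 2) :=
    fun i hi => by
      have h := b.gap_mul_inner_le hb hsc (hs i hi) (hX i)
      rw [sum_sub_distrib, ← mul_sum]
      linarith
  calc _ ≤ ∑ i ∈ s, (‖⁅T, M⁆ (b i)‖ ^ 2 + ∑ j ∈ s, ((Λ - lam i) *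
          (⟪b j, M (b i)⟫ * ⟪b j, ⁅T, M⁆ (b i)⟫) - ⟪b j, ⁅T, M⁆ (b i)⟫ ^ 2)) := sum_le_sum hper
    _ ≤ ∑ i ∈ s, ‖⁅T, M⁆ (b i)‖ ^ 2 := by
      rw [sum_add_distrib]
      linarith [sum_sum_gap_mul_sub_sq_nonpos s lam Λ ha hβ]

end AbstractYang

noncomputable section WeightedL2

variable {X : Type*} (Ω : Finset X) (m : X → ℝ)

/- `ℓ²(Ω, m)` is modelled on `EuclideanSpace ℝ Ω` through `f ↦ √m f`; back in `X → ℝ`,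
vectors are extended by zero off `Ω`, which is how the Dirichlet condition enters. -/
def weightedEmbedding : (X → ℝ) →ₗ[ℝ] EuclideanSpace ℝ Ω where
  toFun f := WithLp.toLp 2 fun x => √(m x) * f x
  map_add' f g := by ext x; simp [mul_add]
  map_smul' a f := by ext x; simp; ring

variable {Ω m}

@[simp]
lemma weightedEmbedding_apply (f : X → ℝ) (x : Ω) : weightedEmbedding Ω m f x = √(m x) * f x :=
  rfl

lemma weightedEmbedding_congr {f g : X → ℝ} (h : ∀ x ∈ Ω, f x = g x) :
    weightedEmbedding Ω m f = weightedEmbedding Ω m g := by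
  ext x; simp [h x x.2]

lemma inner_weightedEmbedding (hm : ∀ x ∈ Ω, 0 ≤ m x) (f g : X → ℝ) :
    ⟪weightedEmbedding Ω m f, weightedEmbedding Ω m g⟫ = ∑ x ∈ Ω, f x * g x * m x := by
  rw [PiLp.inner_apply, ← sum_coe_sort Ω]
  refine sum_congr rfl fun x _ => ?_
  simp only [weightedEmbedding_apply, RCLike.inner_apply, conj_trivial]
  linear_combination (f x * g x) * Real.mul_self_sqrt (hm x x.2)

variable [DecidableEq X]

variable (Ω m) in
def weightedExtension : EuclideanSpace ℝ Ω →ₗ[ℝ] (X → ℝ) where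
  toFun v x := if h : x ∈ Ω then v ⟨x, h⟩ / √(m x) else 0
  map_add' v w := by ext x; by_cases h : x ∈ Ω <;> simp [h, add_div]
  map_smul' a v := by ext x; by_cases h : x ∈ Ω <;> simp [h, mul_div_assoc]

variable (Ω m) in
def weightedCompression (H : (X → ℝ) →ₗ[ℝ] (X → ℝ)) :
    EuclideanSpace ℝ Ω →ₗ[ℝ] EuclideanSpace ℝ Ω :=
  weightedEmbedding Ω m ∘ₗ LinearMap.mulLeft ℝ m⁻¹ ∘ₗ H ∘ₗ weightedExtension Ω m

lemma weightedEmbedding_weightedExtension (hm : ∀ x ∈ Ω, 0 < m x) (v : EuclideanSpace ℝ Ω) :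
    weightedEmbedding Ω m (weightedExtension Ω m v) = v := by
  ext x
  simp [weightedExtension, mul_div_cancel₀ _ (Real.sqrt_pos.2 (hm x x.2)).ne']

lemma weightedExtension_eq_zero (v : EuclideanSpace ℝ Ω) {x : X} (hx : x ∉ Ω) :
    weightedExtension Ω m v x = 0 := by
  simp [weightedExtension, hx]

lemma weightedExtension_weightedEmbedding (hm : ∀ x ∈ Ω, 0 < m x) {f : X → ℝ}
    (hf : ∀ x ∉ Ω, f x = 0) : weightedExtension Ω m (weightedEmbedding Ω m f) = f := by
  ext x
  by_cases hx : x ∈ Ω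
  · simp [weightedExtension, hx, mul_div_cancel_left₀ _ (Real.sqrt_pos.2 (hm x hx)).ne']
  · simp [weightedExtension, hx, hf x hx]

lemma weightedCompression_apply (hm : ∀ x ∈ Ω, 0 < m x) (H : (X → ℝ) →ₗ[ℝ] (X → ℝ))
    {f : X → ℝ} (hf : ∀ x ∉ Ω, f x = 0) :
    weightedCompression Ω m H (weightedEmbedding Ω m f) = weightedEmbedding Ω m (m⁻¹ * H f) := by
  simp [weightedCompression, weightedExtension_weightedEmbedding hm hf]

lemma weightedCompression_isSymmetric (hm : ∀ x ∈ Ω, 0 < m x) {H : (X → ℝ) →ₗ[ℝ] (X → ℝ)}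
    (hH : ∀ f g : X → ℝ, (∀ x ∉ Ω, f x = 0) → (∀ x ∉ Ω, g x = 0) →
      ∑ x ∈ Ω, H f x * g x = ∑ x ∈ Ω, f x * H g x) :
    (weightedCompression Ω m H).IsSymmetric := by
  intro v w
  have hm' : ∀ x ∈ Ω, 0 ≤ m x := fun x hx => (hm x hx).le
  have hv : ∀ x ∉ Ω, weightedExtension Ω m v x = 0 := fun x => weightedExtension_eq_zero v
  have hw : ∀ x ∉ Ω, weightedExtension Ω m w x = 0 := fun x => weightedExtension_eq_zero w
  rw [← weightedEmbedding_weightedExtension hm v, ← weightedEmbedding_weightedExtension hm w,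
    weightedCompression_apply hm H hv, weightedCompression_apply hm H hw,
    inner_weightedEmbedding hm', inner_weightedEmbedding hm']
  convert hH _ _ hv hw using 1 <;> refine sum_congr rfl fun x hx => ?_ <;>
    simp only [Pi.mul_apply, Pi.inv_apply] <;> field_simp [(hm x hx).ne']

lemma toEuclideanLin_diagonal_weightedEmbedding (c : X → ℝ) (f : X → ℝ) :
    Matrix.toEuclideanLin (Matrix.diagonal fun x : Ω => c x) (weightedEmbedding Ω m f) =
      weightedEmbedding Ω m (c * f) := by
  ext x
  simp [Matrix.mulVec_diagonal]
  ring

lemma lie_weightedCompression_apply (hm : ∀ x ∈ Ω, 0 < m x) (H : (X → ℝ) →ₗ[ℝ] (X → ℝ))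
    (c : X → ℝ) {f : X → ℝ} (hf : ∀ x ∉ Ω, f x = 0) :
    ⁅weightedCompression Ω m H, Matrix.toEuclideanLin (Matrix.diagonal fun x : Ω => c x)⁆
        (weightedEmbedding Ω m f) =
      weightedEmbedding Ω m (m⁻¹ * (H (c * f) - c * H f)) := by
  have hcf : ∀ x ∉ Ω, (c * f) x = 0 := fun x hx => by simp [hf x hx]
  rw [Ring.lie_def, LinearMap.sub_apply, Module.End.mul_apply, Module.End.mul_apply,
    toEuclideanLin_diagonal_weightedEmbedding, weightedCompression_apply hm H hcf,
    weightedCompression_apply hm H hf, toEuclideanLin_diagonal_weightedEmbedding, ← map_sub]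
  congr 1; ring

theorem sum_gap_mul_inner_commutator_le {ι : Type*} [Fintype ι] [DecidableEq ι]
    (hm : ∀ x ∈ Ω, 0 < m x) {H : (X → ℝ) →ₗ[ℝ] (X → ℝ)}
    (hH : ∀ f g : X → ℝ, (∀ x ∉ Ω, f x = 0) → (∀ x ∉ Ω, g x = 0) →
      ∑ x ∈ Ω, H f x * g x = ∑ x ∈ Ω, f x * H g x)
    {u : ι → X → ℝ} (hu : ∀ j, ∀ x ∉ Ω, u j x = 0)
    (horth : ∀ i j, ∑ x ∈ Ω, u i x * u j x * m x = if i = j then 1 else 0)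
    (hcard : Fintype.card ι = Ω.card) {lam : ι → ℝ}
    (heig : ∀ j, ∀ x ∈ Ω, H (u j) x = lam j * m x * u j x) (c : X → ℝ) {s : Finset ι} {Λ : ℝ}
    (hs : ∀ i ∈ s, lam i ≤ Λ) (hsc : ∀ j ∉ s, Λ ≤ lam j) :
    ∑ i ∈ s, (Λ - lam i) * ∑ x ∈ Ω, (H (c * u i) x - c x * H (u i) x) * (c x * u i x) ≤
      ∑ i ∈ s, ∑ x ∈ Ω, (H (c * u i) x - c x * H (u i) x) ^ 2 / m x := by
  have hm' : ∀ x ∈ Ω, 0 ≤ m x := fun x hx => (hm x hx).le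
  have hon : Orthonormal ℝ fun j => weightedEmbedding Ω m (u j) :=
    orthonormal_iff_ite.2 fun i j => by rw [inner_weightedEmbedding hm', horth]
  have hspan := hon.linearIndependent.span_eq_top_of_card_eq_finrank' (by simp [hcard])
  set b := OrthonormalBasis.mk hon hspan.ge
  have hbu : ∀ j, b j = weightedEmbedding Ω m (u j) := fun j => by simp [b]
  have hb : ∀ j, weightedCompression Ω m H (b j) = lam j • b j := fun j => by
    rw [hbu, weightedCompression_apply hm H (hu j), ← map_smul]
    refine weightedEmbedding_congr fun x hx => ?_
    simp only [Pi.mul_apply, Pi.inv_apply, Pi.smul_apply, smul_eq_mul, heig j x hx]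
    field_simp [(hm x hx).ne']
  have key := b.sum_gap_mul_inner_lie_le hb (weightedCompression_isSymmetric hm hH)
    (Matrix.isSymmetric_toEuclideanLin_iff.2 (Matrix.isHermitian_diagonal fun x : Ω => c x))
    hs hsc
  convert key using 3 with i hi i hi
  · rw [hbu, lie_weightedCompression_apply hm H c (hu i),
      toEuclideanLin_diagonal_weightedEmbedding, inner_weightedEmbedding hm']
    refine sum_congr rfl fun x hx => ?_
    simp only [Pi.mul_apply, Pi.inv_apply, Pi.sub_apply]
    field_simp [(hm x hx).ne']
  · rw [hbu, lie_weightedCompression_apply hm H c (hu i), ← real_inner_self_eq_norm_sq,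
      inner_weightedEmbedding hm']
    refine sum_congr rfl fun x hx => ?_
    simp only [Pi.mul_apply, Pi.inv_apply, Pi.sub_apply]
    field_simp [(hm x hx).ne']

end WeightedL2

section Shift

variable {G : Type*} [AddCommGroup G] {Ω : Finset G}

lemma sum_mul_shift {f g : G → ℝ} (hf : ∀ x ∉ Ω, f x = 0) (hg : ∀ x ∉ Ω, g x = 0) (a : G) :
    ∑ x ∈ Ω, f (x + a) * g x = ∑ x ∈ Ω, f x * g (x - a) := by
  have hsupp : ∀ {F : G → ℝ}, (∀ x ∉ Ω, F x = 0) → Function.support F ⊆ Ω :=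
    fun hF x hx => by_contra fun h => hx (hF x h)
  rw [← finsum_eq_sum_of_support_subset _ (hsupp fun x hx => by rw [hg x hx, mul_zero]),
    ← finsum_eq_sum_of_support_subset _ (hsupp fun x hx => by rw [hf x hx, zero_mul])]
  conv_rhs => rw [← finsum_comp_equiv (Equiv.addRight a)]
  simp

lemma sum_mul_shift_sub {f g : G → ℝ} (hf : ∀ x ∉ Ω, f x = 0) (hg : ∀ x ∉ Ω, g x = 0) (a : G) :
    ∑ x ∈ Ω, f (x - a) * g x = ∑ x ∈ Ω, f x * g (x + a) := by
  simpa [← sub_eq_add_neg] using sum_mul_shift hf hg (-a)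

lemma sum_shift_le {F : G → ℝ} (hF₀ : ∀ x, 0 ≤ F x) (hF : ∀ x ∉ Ω, F x = 0) (a : G) :
    ∑ x ∈ Ω, F (x + a) ≤ ∑ x ∈ Ω, F x := by
  classical
  calc ∑ x ∈ Ω, F (x + a) = ∑ y ∈ Ω.map (addRightEmbedding a), F y :=
        (sum_map Ω (addRightEmbedding a) F).symm
    _ ≤ ∑ y ∈ Ω.map (addRightEmbedding a) ∪ Ω, F y :=
      sum_le_sum_of_subset_of_nonneg subset_union_left fun y _ _ => hF₀ y
    _ = ∑ x ∈ Ω, F x := (sum_subset subset_union_right fun y _ hy => hF y hy).symm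

lemma sum_second_diff_mul_comm {f g : G → ℝ} (hf : ∀ x ∉ Ω, f x = 0)
    (hg : ∀ x ∉ Ω, g x = 0) (a : G) :
    ∑ x ∈ Ω, (f (x + a) + f (x - a) - 2 * f x) * g x =
      ∑ x ∈ Ω, f x * (g (x + a) + g (x - a) - 2 * g x) := by
  have hl : ∀ x, (f (x + a) + f (x - a) - 2 * f x) * g x =
      f (x + a) * g x + f (x - a) * g x - 2 * (f x * g x) := fun x => by ring
  have hr : ∀ x, f x * (g (x + a) + g (x - a) - 2 * g x) =
      f x * g (x - a) + f x * g (x + a) - 2 * (f x * g x) := fun x => by ring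
  simp only [hl, hr, sum_sub_distrib, sum_add_distrib, sum_mul_shift hf hg,
    sum_mul_shift_sub hf hg]

end Shift

section Lattice

variable {n : ℕ}

lemma sum_abs_eq_one_iff {d : Fin n → ℤ} :
    ∑ i, |d i| = 1 ↔ ∃ α, ∃ s ∈ ({1, -1} : Finset ℤ), Pi.single α s = d := by
  constructor
  · intro h
    obtain ⟨α, hα⟩ : ∃ α, d α ≠ 0 := by
      by_contra! h0
      simp [h0] at h
    have hle : |d α| ≤ 1 := h ▸ single_le_sum (fun i _ => abs_nonneg (d i)) (mem_univ α)
    have hone : |d α| = 1 := le_antisymm hle (Int.one_le_abs hα)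
    have hrest : ∀ i ∈ univ.erase α, |d i| = 0 := by
      refine (sum_eq_zero_iff_of_nonneg fun i _ => abs_nonneg (d i)).1 ?_
      have := add_sum_erase univ (fun i => |d i|) (mem_univ α)
      linarith
    refine ⟨α, d α, ?_, ?_⟩
    · rcases abs_eq zero_le_one |>.1 hone with h1 | h1 <;> simp [h1]
    · funext i
      by_cases hi : i = α
      · subst hi; simp
      · simpa [hi] using (abs_eq_zero.1 (hrest i (mem_erase.2 ⟨hi, mem_univ i⟩))).symm
  · rintro ⟨α, s, hs, rfl⟩
    simp only [mem_insert, mem_singleton] at hs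
    rcases hs with rfl | rfl <;> simp [Pi.single_apply, apply_ite abs]

lemma finsum_mu_mul (x : Fin n → ℤ) (F : (Fin n → ℤ) → ℝ) :
    ∑ᶠ y, mu n x y * F y = ∑ α, (F (x + Pi.single α 1) + F (x - Pi.single α 1)) := by
  classical
  have hmu : ∀ d, mu n x (x + d) = if ∑ i, |d i| = 1 then 1 else 0 := fun d => by
    simp [mu]
  set S : Finset (Fin n × ℤ) := univ ×ˢ {1, -1}
  have hinj : Set.InjOn (fun p : Fin n × ℤ => (Pi.single p.1 p.2 : Fin n → ℤ)) S := by
    rintro ⟨α, s⟩ hs ⟨β, t⟩ ht h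
    simp only [S, coe_product, coe_univ, Set.mem_prod, Set.mem_univ, true_and, coe_insert,
      coe_singleton, Set.mem_insert_iff, Set.mem_singleton_iff] at hs ht h
    have hα := congr_fun h α
    by_cases hab : α = β
    · subst hab; simp_all
    · rcases hs with rfl | rfl <;> simp [hab] at hα
  rw [← finsum_comp_equiv (Equiv.addLeft x),
    finsum_eq_sum_of_support_subset (s := S.image fun p => (Pi.single p.1 p.2 : Fin n → ℤ))]
  · rw [sum_image hinj, sum_product]
    refine sum_congr rfl fun α _ => ?_
    have hone : ∀ s ∈ ({1, -1} : Finset ℤ), mu n x (x + Pi.single α s) = 1 := fun s hs => by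
      rw [hmu, if_pos (sum_abs_eq_one_iff.2 ⟨α, s, hs, rfl⟩)]
    simp only [sum_pair (show (1 : ℤ) ≠ -1 by norm_num), Equiv.coe_addLeft]
    rw [hone 1 (by simp), hone (-1) (by simp), Pi.single_neg, ← sub_eq_add_neg, one_mul, one_mul]
  · intro d hd
    have hd' : ∑ i, |d i| = 1 := by
      by_contra h
      simp [hmu, h] at hd
    obtain ⟨α, s, hs, rfl⟩ := sum_abs_eq_one_iff.1 hd'
    exact mem_image.2 ⟨(α, s), mem_product.2 ⟨mem_univ α, hs⟩, rfl⟩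

lemma lap_eq_sum (f : (Fin n → ℤ) → ℝ) (x : Fin n → ℤ) :
    lap n f x = (deg n)⁻¹ * ∑ α, (f (x + Pi.single α 1) + f (x - Pi.single α 1) - 2 * f x) := by
  rw [lap, finsum_mu_mul, one_div]
  congr 1
  exact sum_congr rfl fun α _ => by ring

variable (n) in
noncomputable def schrodingerOp (V : (Fin n → ℤ) → ℝ) :
    ((Fin n → ℤ) → ℝ) →ₗ[ℝ] ((Fin n → ℤ) → ℝ) where
  toFun f x := -lap n f x + V x * f x
  map_add' f g := by
    ext x
    have h : ∀ α, (f + g) (x + Pi.single α 1) + (f + g) (x - Pi.single α 1) - 2 * (f + g) x =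
        (f (x + Pi.single α 1) + f (x - Pi.single α 1) - 2 * f x) +
          (g (x + Pi.single α 1) + g (x - Pi.single α 1) - 2 * g x) := fun α => by
      simp only [Pi.add_apply]; ring
    change -lap n (f + g) x + V x * (f + g) x =
      (-lap n f x + V x * f x) + (-lap n g x + V x * g x)
    rw [lap_eq_sum, lap_eq_sum, lap_eq_sum, sum_congr rfl fun α _ => h α, sum_add_distrib,
      Pi.add_apply]
    ring
  map_smul' a f := by
    ext x
    have h : ∀ α, (a • f) (x + Pi.single α 1) + (a • f) (x - Pi.single α 1) - 2 * (a • f) x =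
        a * (f (x + Pi.single α 1) + f (x - Pi.single α 1) - 2 * f x) := fun α => by
      simp only [Pi.smul_apply, smul_eq_mul]; ring
    change -lap n (a • f) x + V x * (a • f) x = a * (-lap n f x + V x * f x)
    rw [lap_eq_sum, lap_eq_sum, sum_congr rfl fun α _ => h α, ← mul_sum, Pi.smul_apply,
      smul_eq_mul]
    ring

lemma lap_coord_mul (α : Fin n) (f : (Fin n → ℤ) → ℝ) (x : Fin n → ℤ) :
    lap n (coord α * f) x =
      coord α x * lap n f x + (f (x + Pi.single α 1) - f (x - Pi.single α 1)) / deg n := by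
  have hc₁ : ∀ β, coord α (x + Pi.single β 1) = coord α x + if α = β then 1 else 0 :=
    fun β => by by_cases h : α = β <;> simp [coord, h]
  have hc₂ : ∀ β, coord α (x - Pi.single β 1) = coord α x - if α = β then 1 else 0 :=
    fun β => by by_cases h : α = β <;> simp [coord, h]
  have hsum : ∀ β, (coord α * f) (x + Pi.single β 1) + (coord α * f) (x - Pi.single β 1) -
      2 * (coord α * f) x = coord α x * (f (x + Pi.single β 1) + f (x - Pi.single β 1) - 2 * f x) +
        if α = β then f (x + Pi.single α 1) - f (x - Pi.single α 1) else 0 := fun β => by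
    simp only [Pi.mul_apply, hc₁, hc₂]
    split_ifs with h
    · subst h; ring
    · ring
  rw [lap_eq_sum, lap_eq_sum, sum_congr rfl fun β _ => hsum β, sum_add_distrib, ← mul_sum,
    sum_ite_eq]
  simp only [mem_univ, if_true]
  ring

@[simp]
lemma schrodingerOp_apply (V f : (Fin n → ℤ) → ℝ) (x : Fin n → ℤ) :
    schrodingerOp n V f x = -lap n f x + V x * f x :=
  rfl

lemma schrodingerOp_coord_mul (V : (Fin n → ℤ) → ℝ) (α : Fin n) (f : (Fin n → ℤ) → ℝ)
    (x : Fin n → ℤ) :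
    schrodingerOp n V (coord α * f) x = coord α x * schrodingerOp n V f x -
      (f (x + Pi.single α 1) - f (x - Pi.single α 1)) / deg n := by
  simp only [schrodingerOp_apply, lap_coord_mul, Pi.mul_apply]
  ring

lemma sum_lap_mul (Ω : Finset (Fin n → ℤ)) (f g : (Fin n → ℤ) → ℝ) :
    ∑ x ∈ Ω, lap n f x * g x = (deg n)⁻¹ *
      ∑ α, ∑ x ∈ Ω, (f (x + Pi.single α 1) + f (x - Pi.single α 1) - 2 * f x) * g x := by
  simp only [lap_eq_sum, mul_assoc, sum_mul, ← mul_sum]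
  rw [sum_comm]

lemma sum_lap_mul_comm {Ω : Finset (Fin n → ℤ)} {f g : (Fin n → ℤ) → ℝ}
    (hf : ∀ x ∉ Ω, f x = 0) (hg : ∀ x ∉ Ω, g x = 0) :
    ∑ x ∈ Ω, lap n f x * g x = ∑ x ∈ Ω, f x * lap n g x := by
  simp only [mul_comm (f _) (lap n g _), sum_lap_mul, sum_second_diff_mul_comm hf hg,
    mul_comm (f _)]

lemma sum_schrodingerOp_mul_comm (V : (Fin n → ℤ) → ℝ) {Ω : Finset (Fin n → ℤ)}
    {f g : (Fin n → ℤ) → ℝ} (hf : ∀ x ∉ Ω, f x = 0) (hg : ∀ x ∉ Ω, g x = 0) :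
    ∑ x ∈ Ω, schrodingerOp n V f x * g x = ∑ x ∈ Ω, f x * schrodingerOp n V g x := by
  have hV : ∑ x ∈ Ω, V x * f x * g x = ∑ x ∈ Ω, f x * (V x * g x) :=
    sum_congr rfl fun x _ => by ring
  simp only [schrodingerOp_apply, add_mul, mul_add, neg_mul, mul_neg, sum_add_distrib,
    sum_neg_distrib, sum_lap_mul_comm hf hg, hV]

variable (Ω : Finset (Fin n → ℤ))

/- For `u` vanishing off `Ω` this is `½ ∑_{x ∈ ℤⁿ} (u (x + e_α) - u x)²`, the Dirichlet energy
of the edges in direction `α`. -/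
def directionalEnergy (u : (Fin n → ℤ) → ℝ) (α : Fin n) : ℝ :=
  ∑ x ∈ Ω, u x * (u x - u (x + Pi.single α 1))

variable {Ω} {u : (Fin n → ℤ) → ℝ}

lemma sum_neg_lap_mul_self (hu : ∀ x ∉ Ω, u x = 0) :
    ∑ x ∈ Ω, -lap n u x * u x = (deg n)⁻¹ * (2 * ∑ α, directionalEnergy Ω u α) := by
  have hα : ∀ α, ∑ x ∈ Ω, (u (x + Pi.single α 1) + u (x - Pi.single α 1) - 2 * u x) * u x =
      -2 * directionalEnergy Ω u α := fun α => by
    have h : ∀ x, (u (x + Pi.single α 1) + u (x - Pi.single α 1) - 2 * u x) * u x =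
        u x * u (x + Pi.single α 1) + u (x - Pi.single α 1) * u x - 2 * (u x * u x) :=
      fun x => by ring
    simp only [h, sum_add_distrib, sum_sub_distrib, sum_mul_shift_sub hu hu, directionalEnergy,
      mul_sub, ← mul_sum]
    ring
  simp only [neg_mul, sum_neg_distrib, sum_lap_mul, hα, ← mul_sum]
  ring

lemma sum_central_diff_mul_coord (hu : ∀ x ∉ Ω, u x = 0) (α : Fin n) :
    ∑ x ∈ Ω, (u (x - Pi.single α 1) - u (x + Pi.single α 1)) * (coord α x * u x) =
      ∑ x ∈ Ω, u x ^ 2 - directionalEnergy Ω u α := by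
  have hcu : ∀ x ∉ Ω, coord α x * u x = 0 := fun x hx => by rw [hu x hx, mul_zero]
  simp only [directionalEnergy, sub_mul, sum_sub_distrib, sum_mul_shift_sub hu hcu]
  rw [← sum_sub_distrib, ← sum_sub_distrib]
  exact sum_congr rfl fun x _ => by
    simp only [coord, Pi.add_apply, Pi.single_eq_same]; push_cast; ring

lemma sum_central_diff_sq_le (hu : ∀ x ∉ Ω, u x = 0) (α : Fin n) :
    ∑ x ∈ Ω, (u (x - Pi.single α 1) - u (x + Pi.single α 1)) ^ 2 ≤
      8 * directionalEnergy Ω u α := by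
  have hu2 : ∀ x ∉ Ω, u x ^ 2 = 0 := fun x hx => by rw [hu x hx, sq, mul_zero]
  have hfwd := sum_shift_le (fun x => sq_nonneg (u x)) hu2 (Pi.single α 1)
  have hbwd := sum_shift_le (fun x => sq_nonneg (u x)) hu2 (-Pi.single α 1)
  simp only [← sub_eq_add_neg] at hbwd
  have hcorr := sum_mul_shift_sub hu hu (Pi.single α 1)
  have hpt : ∀ x, (u (x - Pi.single α 1) - u (x + Pi.single α 1)) ^ 2 ≤
      2 * u (x + Pi.single α 1) ^ 2 + 2 * u (x - Pi.single α 1) ^ 2 + 4 * u x ^ 2 -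
        4 * (u x * u (x + Pi.single α 1)) - 4 * (u (x - Pi.single α 1) * u x) := fun x => by
    nlinarith [sq_nonneg (u (x + Pi.single α 1) + u (x - Pi.single α 1) - 2 * u x)]
  have hsum := sum_le_sum fun x (_ : x ∈ Ω) => hpt x
  simp only [sum_add_distrib, sum_sub_distrib, ← mul_sum] at hsum
  have hD : directionalEnergy Ω u α =
      ∑ x ∈ Ω, u x ^ 2 - ∑ x ∈ Ω, u x * u (x + Pi.single α 1) := by
    rw [directionalEnergy, ← sum_sub_distrib]
    exact sum_congr rfl fun x _ => by ring
  linarith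

end Lattice

section Eigen

variable {n : ℕ} {Ω : Finset (Fin n → ℤ)} {V ρ : (Fin n → ℤ) → ℝ}

variable (Ω V ρ) in
structure IsDirichletEigenbasis (lam : ℕ → ℝ) (u : ℕ → (Fin n → ℤ) → ℝ) : Prop where
  eq_zero : ∀ i ∈ Icc 1 Ω.card, ∀ x ∉ Ω, u i x = 0
  eigen : ∀ i ∈ Icc 1 Ω.card, ∀ x ∈ Ω, -(lap n (u i) x) + V x * u i x = lam i * ρ x * u i x
  orthonormal : ∀ i ∈ Icc 1 Ω.card, ∀ j ∈ Icc 1 Ω.card,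
    ∑ x ∈ Ω, u i x * u j x * ρ x * deg n = if i = j then 1 else 0
  monotone : ∀ i j : ℕ, 1 ≤ i → i ≤ j → j ≤ Ω.card → lam i ≤ lam j

lemma deg_pos (hn : 0 < n) : 0 < deg n := by
  unfold deg; positivity

lemma two_mul_sum_directionalEnergy_le {u : (Fin n → ℤ) → ℝ} {μ : ℝ} (hn : 0 < n)
    (hV : ∀ x ∈ Ω, 0 ≤ V x) (hu : ∀ x ∉ Ω, u x = 0)
    (heig : ∀ x ∈ Ω, -(lap n u x) + V x * u x = μ * ρ x * u x)
    (hnorm : ∑ x ∈ Ω, u x * u x * ρ x * deg n = 1) :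
    2 * ∑ α, directionalEnergy Ω u α ≤ μ := by
  have hd := deg_pos hn
  have hsum : ∑ x ∈ Ω, -lap n u x * u x = (deg n)⁻¹ * μ - ∑ x ∈ Ω, V x * u x * u x := by
    have h : ∀ x ∈ Ω, -lap n u x * u x =
        μ * (u x * u x * ρ x * deg n) * (deg n)⁻¹ - V x * u x * u x := fun x hx => by
      rw [eq_sub_of_add_eq (heig x hx)]
      field_simp
    rw [sum_congr rfl h, sum_sub_distrib, ← sum_mul, ← mul_sum, hnorm]
    ring
  have hV' : 0 ≤ ∑ x ∈ Ω, V x * u x * u x :=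
    sum_nonneg fun x hx => by rw [mul_assoc]; exact mul_nonneg (hV x hx) (mul_self_nonneg _)
  rw [sum_neg_lap_mul_self hu] at hsum
  exact le_of_mul_le_mul_left (by linarith) (inv_pos.2 hd)

lemma one_le_sup_mul_deg_mul_sum_sq (hne : Ω.Nonempty) {u : (Fin n → ℤ) → ℝ}
    (hnorm : ∑ x ∈ Ω, u x * u x * ρ x * deg n = 1) :
    1 ≤ Ω.sup' hne ρ * deg n * ∑ x ∈ Ω, u x ^ 2 := by
  have hd : 0 ≤ deg n := by unfold deg; positivity
  rw [← hnorm, mul_sum]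
  exact sum_le_sum fun x hx => by
    nlinarith [mul_le_mul_of_nonneg_right (le_sup' ρ hx) (mul_nonneg (sq_nonneg (u x)) hd)]

lemma sum_gap_mul_sum_central_diff_le (hn : 0 < n) (hρ : ∀ x ∈ Ω, 0 < ρ x)
    {lam : ℕ → ℝ} {u : ℕ → (Fin n → ℤ) → ℝ} (hu : IsDirichletEigenbasis Ω V ρ lam u)
    {k : ℕ} (hk : k + 1 ≤ Ω.card) (α : Fin n) :
    ∑ i ∈ Icc 1 k, (lam (k + 1) - lam i) * ∑ x ∈ Ω,
        (u i (x - Pi.single α 1) - u i (x + Pi.single α 1)) * (coord α x * u i x) ≤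
      ∑ i ∈ Icc 1 k, ∑ x ∈ Ω,
        (u i (x - Pi.single α 1) - u i (x + Pi.single α 1)) ^ 2 / (ρ x * deg n) := by
  have hd := deg_pos hn
  -- with weight `m = 2n ρ` the eigen-equation reads `H uᵢ = λᵢ m uᵢ` and the `uᵢ` are orthonormal
  set H := deg n • schrodingerOp n V
  have hH : ∀ f x, H f x = deg n * schrodingerOp n V f x := fun f x => rfl
  have hcomm : ∀ f x, H (coord α * f) x - coord α x * H f x =
      f (x - Pi.single α 1) - f (x + Pi.single α 1) := fun f x => by
    rw [hH, hH, schrodingerOp_coord_mul]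
    field_simp
    ring
  have hsymm : ∀ f g : (Fin n → ℤ) → ℝ, (∀ x ∉ Ω, f x = 0) → (∀ x ∉ Ω, g x = 0) →
      ∑ x ∈ Ω, H f x * g x = ∑ x ∈ Ω, f x * H g x := fun f g hf hg => by
    simp only [hH, mul_assoc, mul_left_comm (f _), ← mul_sum, sum_schrodingerOp_mul_comm V hf hg]
  have hsub : Icc 1 k ⊆ Icc 1 Ω.card := Icc_subset_Icc_right (by omega)
  have key := sum_gap_mul_inner_commutator_le (m := fun x => ρ x * deg n)
    (fun x hx => mul_pos (hρ x hx) hd) hsymm (u := fun j : Icc 1 Ω.card => u j)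
    (fun j => hu.eq_zero j j.2)
    (fun i j => by simp only [← mul_assoc, hu.orthonormal i i.2 j j.2, Subtype.ext_iff])
    (by simp) (lam := fun j => lam j)
    (fun j x hx => by rw [hH, schrodingerOp_apply, hu.eigen j j.2 x hx]; ring) (coord α)
    (s := (Icc 1 k).subtype (· ∈ Icc 1 Ω.card)) (Λ := lam (k + 1))
    (fun i hi => by
      simp only [mem_subtype, mem_Icc] at hi
      exact hu.monotone i (k + 1) hi.1 (by omega) hk)
    (fun j hj => by
      have := mem_Icc.1 j.2
      simp only [mem_subtype, mem_Icc, not_and, not_le] at hj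
      exact hu.monotone (k + 1) j (by omega) (hj this.1) this.2)
  simp only [hcomm] at key
  have hmem : ∀ i ∈ Icc 1 k, i ∈ Icc 1 Ω.card := fun _ hi => hsub hi
  exact ((sum_subtype_of_mem _ hmem).symm.trans_le key).trans_eq (sum_subtype_of_mem _ hmem)

lemma sum_central_diff_sq_div_le (hn : 0 < n) (hne : Ω.Nonempty) (hρ : ∀ x ∈ Ω, 0 < ρ x)
    {u : (Fin n → ℤ) → ℝ} (hu : ∀ x ∉ Ω, u x = 0) (α : Fin n) :
    ∑ x ∈ Ω, (u (x - Pi.single α 1) - u (x + Pi.single α 1)) ^ 2 / (ρ x * deg n) ≤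
      8 * directionalEnergy Ω u α / (Ω.inf' hne ρ * deg n) := by
  have hd := deg_pos hn
  have hp : 0 < Ω.inf' hne ρ * deg n := mul_pos ((lt_inf'_iff hne).2 hρ) hd
  calc _ ≤ ∑ x ∈ Ω, (u (x - Pi.single α 1) - u (x + Pi.single α 1)) ^ 2 / (Ω.inf' hne ρ * deg n) :=
        sum_le_sum fun x hx => div_le_div_of_nonneg_left (sq_nonneg _) hp
          (mul_le_mul_of_nonneg_right (inf'_le ρ hx) hd.le)
    _ = _ / (Ω.inf' hne ρ * deg n) := (sum_div _ _ _).symm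
    _ ≤ _ := div_le_div_of_nonneg_right (sum_central_diff_sq_le hu α) hp.le

lemma sum_gap_mul_sub_directionalEnergy_le (hn : 0 < n) (hne : Ω.Nonempty) (hρ : ∀ x ∈ Ω, 0 < ρ x)
    {lam : ℕ → ℝ} {u : ℕ → (Fin n → ℤ) → ℝ} (hu : IsDirichletEigenbasis Ω V ρ lam u)
    {k : ℕ} (hk : k + 1 ≤ Ω.card) (α : Fin n) :
    ∑ i ∈ Icc 1 k, (lam (k + 1) - lam i) * (∑ x ∈ Ω, u i x ^ 2 - directionalEnergy Ω (u i) α) ≤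
      ∑ i ∈ Icc 1 k, 8 * directionalEnergy Ω (u i) α / (Ω.inf' hne ρ * deg n) := by
  have hsub : Icc 1 k ⊆ Icc 1 Ω.card := Icc_subset_Icc_right (by omega)
  calc _ = ∑ i ∈ Icc 1 k, (lam (k + 1) - lam i) * ∑ x ∈ Ω,
        (u i (x - Pi.single α 1) - u i (x + Pi.single α 1)) * (coord α x * u i x) :=
        sum_congr rfl fun i hi => by rw [sum_central_diff_mul_coord (hu.eq_zero i (hsub hi))]
    _ ≤ _ := sum_gap_mul_sum_central_diff_le hn hρ hu hk α
    _ ≤ _ := sum_le_sum fun i hi =>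
      sum_central_diff_sq_div_le hn hne hρ (hu.eq_zero i (hsub hi)) α

lemma sum_gap_mul_le (hn : 0 < n) (hne : Ω.Nonempty) (hV : ∀ x ∈ Ω, 0 ≤ V x)
    (hρ : ∀ x ∈ Ω, 0 < ρ x)
    {lam : ℕ → ℝ} {u : ℕ → (Fin n → ℤ) → ℝ} (hu : IsDirichletEigenbasis Ω V ρ lam u)
    {k : ℕ} (hk : k + 1 ≤ Ω.card) :
    ∑ i ∈ Icc 1 k, (lam (k + 1) - lam i) * (1 / (2 * Ω.sup' hne ρ) - lam i / 2) ≤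
      2 / (n * Ω.inf' hne ρ) * ∑ i ∈ Icc 1 k, lam i := by
  have hsub : Icc 1 k ⊆ Icc 1 Ω.card := Icc_subset_Icc_right (by omega)
  have hP : 0 < Ω.sup' hne ρ := (lt_sup'_iff hne).2 ⟨_, hne.choose_spec, hρ _ hne.choose_spec⟩
  have hp : 0 < Ω.inf' hne ρ := (lt_inf'_iff hne).2 hρ
  have hn' : (0 : ℝ) < n := Nat.cast_pos.2 hn
  have henergy : ∀ i ∈ Icc 1 k, 2 * ∑ α, directionalEnergy Ω (u i) α ≤ lam i := fun i hi =>
    two_mul_sum_directionalEnergy_le hn hV (hu.eq_zero i (hsub hi)) (hu.eigen i (hsub hi))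
      (by simpa using hu.orthonormal i (hsub hi) i (hsub hi))
  have hlow : ∀ i ∈ Icc 1 k, 1 / (2 * Ω.sup' hne ρ) - lam i / 2 ≤
      ∑ α : Fin n, (∑ x ∈ Ω, u i x ^ 2 - directionalEnergy Ω (u i) α) := fun i hi => by
    have hmass := one_le_sup_mul_deg_mul_sum_sq hne
      (by simpa using hu.orthonormal i (hsub hi) i (hsub hi))
    have hS : 1 / (2 * Ω.sup' hne ρ) ≤ n * ∑ x ∈ Ω, u i x ^ 2 := by
      rw [div_le_iff₀ (by positivity)]
      unfold deg at hmass
      linarith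
    rw [sum_sub_distrib, sum_const, card_univ, Fintype.card_fin, nsmul_eq_mul]
    linarith [henergy i hi]
  calc _ ≤ ∑ i ∈ Icc 1 k, (lam (k + 1) - lam i) *
        ∑ α : Fin n, (∑ x ∈ Ω, u i x ^ 2 - directionalEnergy Ω (u i) α) :=
        sum_le_sum fun i hi => mul_le_mul_of_nonneg_left (hlow i hi)
          (sub_nonneg.2 (hu.monotone i (k + 1) (mem_Icc.1 hi).1 (by simp at hi; omega) hk))
    _ = ∑ α : Fin n, ∑ i ∈ Icc 1 k,
        (lam (k + 1) - lam i) * (∑ x ∈ Ω, u i x ^ 2 - directionalEnergy Ω (u i) α) := by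
      simp only [mul_sum]; exact sum_comm
    _ ≤ ∑ α : Fin n, ∑ i ∈ Icc 1 k, 8 * directionalEnergy Ω (u i) α / (Ω.inf' hne ρ * deg n) :=
        sum_le_sum fun α _ =>
          sum_gap_mul_sub_directionalEnergy_le hn hne hρ hu hk α
    _ ≤ ∑ i ∈ Icc 1 k, 2 / (n * Ω.inf' hne ρ) * lam i := by
      rw [sum_comm]
      refine sum_le_sum fun i hi => ?_
      rw [← sum_div, ← mul_sum, deg]
      rw [div_le_iff₀ (by positivity)]
      have := henergy i hi
      field_simp
      nlinarith
    _ = _ := (mul_sum _ _ _).symm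

end Eigen

lemma mul_one_sub_le_of_sum_gap_mul_le {ι : Type*} {s : Finset ι} (hs : s.Nonempty) (lam : ι → ℝ)
    {Λ P m p : ℝ} (hP : 0 < P)
    (h : ∑ i ∈ s, (Λ - lam i) * (1 / (2 * P) - lam i / 2) ≤ 2 / (m * p) * ∑ i ∈ s, lam i) :
    Λ * (1 - (P / #s) * ∑ i ∈ s, lam i) ≤
      (1 / #s) * (1 + 4 * P / (m * p)) * (∑ i ∈ s, lam i) - (P / #s) * ∑ i ∈ s, lam i ^ 2 := by
  have hk : (0 : ℝ) < #s := by exact_mod_cast hs.card_pos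
  have hexp : ∑ i ∈ s, (Λ - lam i) * (1 / (2 * P) - lam i / 2) =
      (#s * Λ - ∑ i ∈ s, lam i) / (2 * P) - (Λ * ∑ i ∈ s, lam i - ∑ i ∈ s, lam i ^ 2) / 2 := by
    have hi : ∀ i, (Λ - lam i) * (1 / (2 * P) - lam i / 2) =
        Λ / (2 * P) - 1 / (2 * P) * lam i - Λ / 2 * lam i + 1 / 2 * lam i ^ 2 := fun i => by ring
    simp only [hi, sum_add_distrib, sum_sub_distrib, ← mul_sum, sum_const, nsmul_eq_mul]
    ring
  rw [hexp] at h
  have heq : (1 / #s) * (1 + 4 * P / (m * p)) * (∑ i ∈ s, lam i) - (P / #s) * ∑ i ∈ s, lam i ^ 2 -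
      Λ * (1 - (P / #s) * ∑ i ∈ s, lam i) = 2 * P / #s * (2 / (m * p) * ∑ i ∈ s, lam i -
        ((#s * Λ - ∑ i ∈ s, lam i) / (2 * P) - (Λ * ∑ i ∈ s, lam i - ∑ i ∈ s, lam i ^ 2) / 2)) := by
    field_simp
    ring
  linarith [mul_nonneg (by positivity : (0 : ℝ) ≤ 2 * P / #s) (sub_nonneg.2 h)]

theorem yang_second_type_general (n : ℕ) (hn : 0 < n) (Ω : Finset (Fin n → ℤ)) (hne : Ω.Nonempty)
    (V ρ : (Fin n → ℤ) → ℝ)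
    (hV : ∀ x ∈ Ω, 0 ≤ V x) (hρ : ∀ x ∈ Ω, 0 < ρ x)
    (lam : ℕ → ℝ) (u : ℕ → (Fin n → ℤ) → ℝ)
    (hu0 : ∀ i ∈ Finset.Icc 1 Ω.card, ∀ x ∉ Ω, u i x = 0)
    (heig : ∀ i ∈ Finset.Icc 1 Ω.card, ∀ x ∈ Ω,
      -(lap n (u i) x) + V x * u i x = lam i * ρ x * u i x)
    (horth : ∀ i ∈ Finset.Icc 1 Ω.card, ∀ j ∈ Finset.Icc 1 Ω.card,
      ∑ x ∈ Ω, u i x * u j x * ρ x * deg n = if i = j then 1 else 0)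
    (hmono : ∀ i j : ℕ, 1 ≤ i → i ≤ j → j ≤ Ω.card → lam i ≤ lam j)
    (k : ℕ) (hk1 : 1 ≤ k) (hk2 : k ≤ Ω.card - 1) :
    lam (k + 1) * (1 - (Ω.sup' hne ρ / k) * ∑ i ∈ Finset.Icc 1 k, lam i)
      ≤ (1 / k) * (1 + 4 * Ω.sup' hne ρ / (n * Ω.inf' hne ρ)) *
          (∑ i ∈ Finset.Icc 1 k, lam i)
        - (Ω.sup' hne ρ / k) * ∑ i ∈ Finset.Icc 1 k, (lam i) ^ 2 := by
  have hk : k + 1 ≤ Ω.card := by have := hne.card_pos; omega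
  have hP : 0 < Ω.sup' hne ρ := (lt_sup'_iff hne).2 ⟨_, hne.choose_spec, hρ _ hne.choose_spec⟩
  have h := mul_one_sub_le_of_sum_gap_mul_le (s := Icc 1 k) (by simp; omega) lam hP
    (sum_gap_mul_le hn hne hV hρ ⟨hu0, heig, horth, hmono⟩ hk)
  simpa using h

/-- Yang's second type inequality for the discrete Schrödinger operator on a
finite subset of `ℤⁿ`. -/
theorem yang_second_type (n : ℕ) (hn : 0 < n) (Ω : Finset (Fin n → ℤ)) (hne : Ω.Nonempty)
    (V ρ : (Fin n → ℤ) → ℝ)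
    (hV : ∀ x ∈ Ω, 0 ≤ V x) (hρ : ∀ x ∈ Ω, 0 < ρ x)
    (lam : ℕ → ℝ) (u : ℕ → (Fin n → ℤ) → ℝ)
    (hu0 : ∀ i ∈ Finset.Icc 1 Ω.card, ∀ x ∉ Ω, u i x = 0)
    (heig : ∀ i ∈ Finset.Icc 1 Ω.card, ∀ x ∈ Ω,
      -(lap n (u i) x) + V x * u i x = lam i * ρ x * u i x)
    (horth : ∀ i ∈ Finset.Icc 1 Ω.card, ∀ j ∈ Finset.Icc 1 Ω.card,
      ∑ x ∈ Ω, u i x * u j x * ρ x * deg n = if i = j then 1 else 0)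
    (hmono : ∀ i j : ℕ, 1 ≤ i → i ≤ j → j ≤ Ω.card → lam i ≤ lam j)
    (hpos : 0 < lam 1)
    (k : ℕ) (hk1 : 1 ≤ k) (hk2 : k ≤ Ω.card - 1) :
    lam (k + 1) * (1 - (Ω.sup' hne ρ / k) * ∑ i ∈ Finset.Icc 1 k, lam i)
      ≤ (1 / k) * (1 + 4 * Ω.sup' hne ρ / (n * Ω.inf' hne ρ)) *
          (∑ i ∈ Finset.Icc 1 k, lam i)
        - (Ω.sup' hne ρ / k) * ∑ i ∈ Finset.Icc 1 k, (lam i) ^ 2 :=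
  yang_second_type_general n hn Ω hne V ρ hV hρ lam u hu0 heig horth hmono k hk1 hk2
end

section
/- Let Ω ⊂ ℤⁿ be finite with Dirichlet Schrödinger eigendata as above, g a coordinate function, and φ_i = g u_i − Σ_j a_{ij} u_j the projected trial function. Then −2 Σ_{x∈Ω} φ_i(x) Γ(g,u_i)(x) d_x = −2 Σ_{x∈Ω} g(x) u_i(x) Γ(g,u_i)(x) d_x + Σ_{j=1}^k (λ_i − λ_j) a_{ij}², and this quantity is nonnegative. -/
open Finset

/-- The coefficient `aᵢⱼ = ∑_x g uᵢ uⱼ ρ d_x` for the coordinate function `g = x_α`. -/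
noncomputable def aCoef (n : ℕ) (Ω : Finset (Fin n → ℤ)) (ρ : (Fin n → ℤ) → ℝ)
    (u : ℕ → (Fin n → ℤ) → ℝ) (α : Fin n) (i j : ℕ) : ℝ :=
  ∑ x ∈ Ω, coord α x * u i x * u j x * ρ x * deg n

/-- The coefficient `bᵢⱼ = ∑_x uⱼ Γ(g,uᵢ) d_x` for the coordinate function `g = x_α`. -/
noncomputable def bCoef (n : ℕ) (Ω : Finset (Fin n → ℤ)) (u : ℕ → (Fin n → ℤ) → ℝ)
    (α : Fin n) (i j : ℕ) : ℝ :=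
  ∑ x ∈ Ω, u j x * gam n (coord α) (u i) x * deg n

/-- The projected trial function `φᵢ = g uᵢ - ∑_{j=1}^k aᵢⱼ uⱼ`. -/
noncomputable def phi (n : ℕ) (Ω : Finset (Fin n → ℤ)) (ρ : (Fin n → ℤ) → ℝ)
    (u : ℕ → (Fin n → ℤ) → ℝ) (α : Fin n) (k i : ℕ) (x : Fin n → ℤ) : ℝ :=
  coord α x * u i x - ∑ j ∈ Finset.Icc 1 k, aCoef n Ω ρ u α i j * u j x

/-!
Because `Δ x_α = 0` (the reflection `y ↦ 2x - y` is a symmetry of the neighbourhood of `x`), the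
product rule gives `2 Γ(g, u) = Δ(g u) - g Δu`; Green's formula then turns `2 bᵢⱼ` into
`∑ (g uᵢ Δuⱼ - g uⱼ Δuᵢ) d_x = (λᵢ - λⱼ) aᵢⱼ`, and the identity follows by expanding `φᵢ`.

For the sign, `N = |Ω|` orthonormal functions on the `N`-point set `Ω` form a basis (a square
matrix with a right inverse is invertible), so `g uᵢ = ∑_{m ≤ N} aᵢₘ uₘ` on `Ω` and
`φᵢ = ∑_{k < m ≤ N} aᵢₘ uₘ`. Hence `-2 ∑ φᵢ Γ(g, uᵢ) d_x = ∑_{k < m ≤ N} (λₘ - λᵢ) aᵢₘ² ≥ 0`,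
since `m > k ≥ i`.
-/

section Orthonormal

variable {X ι K : Type*} [CommRing K] {Ω : Finset X} {s : Finset ι} {w : X → K} {u : ι → X → K}

theorem sum_mul_mul_eq_ite_of_orthonormal [DecidableEq X] [DecidableEq ι] (hcard : #s = #Ω)
    (horth : ∀ i ∈ s, ∀ j ∈ s, ∑ x ∈ Ω, u i x * u j x * w x = if i = j then 1 else 0)
    {x y : X} (hx : x ∈ Ω) (hy : y ∈ Ω) :
    ∑ m ∈ s, u m x * u m y * w y = if x = y then 1 else 0 := by
  let A : Matrix s Ω K := fun m z => u m z
  let B : Matrix Ω s K := fun z m => w z * u m z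
  have hAB : A * B = 1 := by
    ext m m'
    rw [Matrix.mul_apply, Matrix.one_apply, if_congr Subtype.ext_iff rfl rfl,
      ← horth m m.2 m' m'.2, ← sum_coe_sort Ω]
    exact sum_congr rfl fun _ _ => by ring
  -- `A * B = 1` is orthonormality of the `u m`; `B * A = 1` is their completeness.
  have hBA := congrFun (congrFun ((Matrix.mul_eq_one_comm_of_equiv
    (Fintype.equivOfCardEq (by simpa using hcard))).1 hAB) ⟨y, hy⟩) ⟨x, hx⟩
  rw [Matrix.mul_apply, Matrix.one_apply, if_congr Subtype.ext_iff rfl rfl] at hBA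
  rw [if_congr eq_comm rfl rfl, ← hBA, ← sum_coe_sort s]
  exact sum_congr rfl fun _ _ => by ring

theorem eq_sum_mul_of_orthonormal [DecidableEq ι] (hcard : #s = #Ω)
    (horth : ∀ i ∈ s, ∀ j ∈ s, ∑ x ∈ Ω, u i x * u j x * w x = if i = j then 1 else 0)
    (f : X → K) {x : X} (hx : x ∈ Ω) :
    f x = ∑ m ∈ s, (∑ y ∈ Ω, f y * u m y * w y) * u m x := by
  classical
  calc f x = ∑ y ∈ Ω, f y * if x = y then 1 else 0 := by simp [hx]
    _ = ∑ y ∈ Ω, f y * ∑ m ∈ s, u m x * u m y * w y := sum_congr rfl fun y hy => by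
          rw [sum_mul_mul_eq_ite_of_orthonormal hcard horth hx hy]
    _ = _ := by
          simp only [mul_sum, sum_mul]
          rw [sum_comm]
          exact sum_congr rfl fun _ _ => sum_congr rfl fun _ _ => by ring

end Orthonormal

theorem sum_mul_sum_mul_sub_comm {X K : Type*} [CommRing K] (T : Finset X) (μ : X → X → K)
    (hμ : ∀ x y, μ x y = μ y x) (f h : X → K) :
    ∑ x ∈ T, f x * ∑ y ∈ T, μ x y * (h y - h x) = ∑ x ∈ T, h x * ∑ y ∈ T, μ x y * (f y - f x) := by
  have hcross : ∑ x ∈ T, ∑ y ∈ T, f x * (μ x y * h y) = ∑ x ∈ T, ∑ y ∈ T, h x * (μ x y * f y) := by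
    rw [sum_comm]
    exact sum_congr rfl fun x _ => sum_congr rfl fun y _ => by rw [hμ]; ring
  simp only [mul_sub, mul_sum, sum_sub_distrib, hcross]
  congr 1
  exact sum_congr rfl fun x _ => sum_congr rfl fun y _ => by ring

section Lattice

variable {n : ℕ}

noncomputable def cube (n : ℕ) (x : Fin n → ℤ) : Finset (Fin n → ℤ) :=
  Fintype.piFinset fun i => Icc (x i - 1) (x i + 1)

theorem self_mem_cube (x : Fin n → ℤ) : x ∈ cube n x := by
  simp [cube]

theorem mu_comm (x y : Fin n → ℤ) : mu n x y = mu n y x := by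
  simp only [mu, abs_sub_comm]

theorem mu_eq_zero_of_notMem_cube {x y : Fin n → ℤ} (h : y ∉ cube n x) : mu n x y = 0 := by
  rw [mu, if_neg]
  intro hsum
  refine h (Fintype.mem_piFinset.2 fun i => mem_Icc.2 ?_)
  have hi : |x i - y i| ≤ 1 :=
    hsum ▸ single_le_sum (fun j _ => abs_nonneg (x j - y j)) (mem_univ i)
  constructor <;> linarith [abs_le.1 hi]

theorem finsum_mu_mul_eq_sum {x : Fin n → ℤ} {T : Finset (Fin n → ℤ)} (hT : cube n x ⊆ T)
    (F : (Fin n → ℤ) → ℝ) : ∑ᶠ y, mu n x y * F y = ∑ y ∈ T, mu n x y * F y :=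
  finsum_eq_sum_of_support_subset _ fun y hy => by_contra fun hyT =>
    hy (show mu n x y * F y = 0 by rw [mu_eq_zero_of_notMem_cube fun h => hyT (hT h), zero_mul])

theorem lap_eq_sum_s15 {x : Fin n → ℤ} {T : Finset (Fin n → ℤ)} (hT : cube n x ⊆ T)
    (f : (Fin n → ℤ) → ℝ) : lap n f x = 1 / deg n * ∑ y ∈ T, mu n x y * (f y - f x) := by
  rw [lap, finsum_mu_mul_eq_sum hT]

theorem gam_eq_sum {x : Fin n → ℤ} {T : Finset (Fin n → ℤ)} (hT : cube n x ⊆ T)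
    (f g : (Fin n → ℤ) → ℝ) :
    gam n f g x = 1 / (2 * deg n) * ∑ y ∈ T, mu n x y * ((f y - f x) * (g y - g x)) := by
  simp_rw [gam, mul_assoc, finsum_mu_mul_eq_sum hT]

theorem lap_coord (α : Fin n) (x : Fin n → ℤ) : lap n (coord α) x = 0 := by
  have hrefl : ∀ y, mu n x (x + x - y) * (coord α (x + x - y) - coord α x)
      = -(mu n x y * (coord α y - coord α x)) := by
    intro y
    have hmu : mu n x (x + x - y) = mu n x y := by
      simp only [mu, Pi.sub_apply, Pi.add_apply]
      congr 2
      exact sum_congr rfl fun i _ => by rw [← abs_neg]; ring_nf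
    simp only [hmu, coord, Pi.sub_apply, Pi.add_apply]
    push_cast
    ring
  have hS : ∑ᶠ y, mu n x y * (coord α y - coord α x)
      = -∑ᶠ y, mu n x y * (coord α y - coord α x) :=
    calc _ = ∑ᶠ y, mu n x (x + x - y) * (coord α (x + x - y) - coord α x) :=
          (finsum_comp_equiv (Equiv.subLeft (x + x))).symm
      _ = _ := by simp only [hrefl, finsum_neg_distrib]
  rw [lap, eq_zero_of_neg_eq hS.symm, mul_zero]

theorem lap_mul (f h : (Fin n → ℤ) → ℝ) (x : Fin n → ℤ) :
    lap n (fun y => f y * h y) x = 2 * gam n f h x + f x * lap n h x + h x * lap n f x := by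
  have htwo : 2 * (1 / (2 * deg n)) = 1 / deg n := by
    rw [mul_one_div, div_mul_cancel_left₀ two_ne_zero, one_div]
  rw [lap_eq_sum_s15 subset_rfl, lap_eq_sum_s15 subset_rfl, lap_eq_sum_s15 subset_rfl, gam_eq_sum subset_rfl,
    ← mul_assoc, htwo]
  simp only [mul_sum, ← sum_add_distrib]
  exact sum_congr rfl fun y _ => by ring

theorem two_mul_gam_coord (α : Fin n) (h : (Fin n → ℤ) → ℝ) (x : Fin n → ℤ) :
    2 * gam n (coord α) h x = lap n (fun y => coord α y * h y) x - coord α x * lap n h x := by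
  have hprod := lap_mul (coord α) h x
  rw [lap_coord, mul_zero, add_zero] at hprod
  linarith

theorem sum_mul_lap_comm (Ω : Finset (Fin n → ℤ)) {f h : (Fin n → ℤ) → ℝ}
    (hf : ∀ x ∉ Ω, f x = 0) (hh : ∀ x ∉ Ω, h x = 0) :
    ∑ x ∈ Ω, f x * lap n h x = ∑ x ∈ Ω, h x * lap n f x := by
  classical
  set T := Ω.biUnion (cube n)
  have hΩT : Ω ⊆ T := fun x hx => mem_biUnion.2 ⟨x, hx, self_mem_cube x⟩
  have hext : ∀ f h : (Fin n → ℤ) → ℝ, (∀ x ∉ Ω, f x = 0) →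
      ∑ x ∈ Ω, f x * lap n h x = 1 / deg n * ∑ x ∈ T, f x * ∑ y ∈ T, mu n x y * (h y - h x) := by
    intro f h hf
    rw [mul_sum, ← sum_subset hΩT fun x _ hx => by rw [hf x hx, zero_mul, mul_zero]]
    exact sum_congr rfl fun x hx => by rw [lap_eq_sum_s15 (subset_biUnion_of_mem _ hx)]; ring
  rw [hext f h hf, hext h f hh, sum_mul_sum_mul_sub_comm T (mu n) mu_comm]

end Lattice

section Eigen

variable {n : ℕ} {Ω : Finset (Fin n → ℤ)} {ρ : (Fin n → ℤ) → ℝ} {u : ℕ → (Fin n → ℤ) → ℝ}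
  {α : Fin n} {i : ℕ}

structure IsDirichletEigenfunction (n : ℕ) (Ω : Finset (Fin n → ℤ)) (V ρ : (Fin n → ℤ) → ℝ)
    (lam : ℝ) (f : (Fin n → ℤ) → ℝ) : Prop where
  eq_zero_of_notMem : ∀ x ∉ Ω, f x = 0
  eigen : ∀ x ∈ Ω, -(lap n f x) + V x * f x = lam * ρ x * f x

theorem two_mul_bCoef {V : (Fin n → ℤ) → ℝ} {lam : ℕ → ℝ} {j : ℕ}
    (hi : IsDirichletEigenfunction n Ω V ρ (lam i) (u i))
    (hj : IsDirichletEigenfunction n Ω V ρ (lam j) (u j)) :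
    2 * bCoef n Ω u α i j = (lam i - lam j) * aCoef n Ω ρ u α i j := by
  have hgreen := sum_mul_lap_comm Ω (f := u j) (h := fun y => coord α y * u i y)
    hj.eq_zero_of_notMem fun x hx => by rw [hi.eq_zero_of_notMem x hx, mul_zero]
  have hb : 2 * bCoef n Ω u α i j = (∑ x ∈ Ω, u j x * lap n (fun y => coord α y * u i y) x
      - ∑ x ∈ Ω, u j x * (coord α x * lap n (u i) x)) * deg n := by
    rw [bCoef, mul_sum, ← sum_sub_distrib, sum_mul]
    exact sum_congr rfl fun x _ => by
      linear_combination (u j x * deg n) * two_mul_gam_coord α (u i) x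
  rw [hb, hgreen, ← sum_sub_distrib, aCoef, mul_sum, sum_mul]
  exact sum_congr rfl fun x hx => by
    linear_combination (coord α x * deg n) * (u j x * hi.eigen x hx - u i x * hj.eigen x hx)

theorem two_mul_sum_aCoef_mul_bCoef {V : (Fin n → ℤ) → ℝ} {lam : ℕ → ℝ} {t : Finset ℕ}
    (hi : IsDirichletEigenfunction n Ω V ρ (lam i) (u i))
    (ht : ∀ m ∈ t, IsDirichletEigenfunction n Ω V ρ (lam m) (u m)) :
    2 * ∑ m ∈ t, aCoef n Ω ρ u α i m * bCoef n Ω u α i m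
      = ∑ m ∈ t, (lam i - lam m) * aCoef n Ω ρ u α i m ^ 2 := by
  rw [mul_sum]
  exact sum_congr rfl fun m hm => by
    linear_combination aCoef n Ω ρ u α i m * two_mul_bCoef (α := α) hi (ht m hm)

theorem sum_sum_mul_gam_eq_sum_mul_bCoef (t : Finset ℕ) (c : ℕ → ℝ) :
    ∑ x ∈ Ω, (∑ m ∈ t, c m * u m x) * gam n (coord α) (u i) x * deg n
      = ∑ m ∈ t, c m * bCoef n Ω u α i m := by
  simp only [bCoef, sum_mul, mul_sum]
  rw [sum_comm]
  exact sum_congr rfl fun _ _ => sum_congr rfl fun _ _ => by ring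

theorem sum_phi_mul_gam_eq (k : ℕ) :
    ∑ x ∈ Ω, phi n Ω ρ u α k i x * gam n (coord α) (u i) x * deg n
      = ∑ x ∈ Ω, coord α x * u i x * gam n (coord α) (u i) x * deg n
        - ∑ j ∈ Icc 1 k, aCoef n Ω ρ u α i j * bCoef n Ω u α i j := by
  rw [← sum_sum_mul_gam_eq_sum_mul_bCoef, ← sum_sub_distrib]
  exact sum_congr rfl fun x _ => by rw [phi]; ring

theorem phi_eq_sum_sdiff
    (horth : ∀ i ∈ Icc 1 #Ω, ∀ j ∈ Icc 1 #Ω,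
      ∑ x ∈ Ω, u i x * u j x * ρ x * deg n = if i = j then 1 else 0)
    {k : ℕ} (hk : k ≤ #Ω) {x : Fin n → ℤ} (hx : x ∈ Ω) :
    phi n Ω ρ u α k i x = ∑ m ∈ Icc 1 #Ω \ Icc 1 k, aCoef n Ω ρ u α i m * u m x := by
  have hexp := eq_sum_mul_of_orthonormal (s := Icc 1 #Ω) (w := fun y => ρ y * deg n) (by simp)
    (fun i hi j hj => by simpa only [mul_assoc] using horth i hi j hj)
    (fun y => coord α y * u i y) hx
  rw [sum_sdiff_eq_sub (Icc_subset_Icc_right hk), phi, hexp]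
  simp only [aCoef, mul_assoc]

end Eigen

theorem phi_gamma_identity_and_nonneg_general (n : ℕ) (Ω : Finset (Fin n → ℤ))
    (V ρ : (Fin n → ℤ) → ℝ)
    (lam : ℕ → ℝ) (u : ℕ → (Fin n → ℤ) → ℝ)
    (hu0 : ∀ i ∈ Finset.Icc 1 Ω.card, ∀ x ∉ Ω, u i x = 0)
    (heig : ∀ i ∈ Finset.Icc 1 Ω.card, ∀ x ∈ Ω,
      -(lap n (u i) x) + V x * u i x = lam i * ρ x * u i x)
    (horth : ∀ i ∈ Finset.Icc 1 Ω.card, ∀ j ∈ Finset.Icc 1 Ω.card,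
      ∑ x ∈ Ω, u i x * u j x * ρ x * deg n = if i = j then 1 else 0)
    (hmono : ∀ i j : ℕ, 1 ≤ i → i ≤ j → j ≤ Ω.card → lam i ≤ lam j)
    (k : ℕ) (hk2 : k ≤ Ω.card - 1)
    (α : Fin n) (i : ℕ) (hi1 : 1 ≤ i) (hik : i ≤ k) :
    (-2 * ∑ x ∈ Ω, phi n Ω ρ u α k i x * gam n (coord α) (u i) x * deg n
        = -2 * ∑ x ∈ Ω, coord α x * u i x * gam n (coord α) (u i) x * deg n
          + ∑ j ∈ Finset.Icc 1 k, (lam i - lam j) * (aCoef n Ω ρ u α i j) ^ 2)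
    ∧ 0 ≤ -2 * ∑ x ∈ Ω, phi n Ω ρ u α k i x * gam n (coord α) (u i) x * deg n := by
  have hkN : k ≤ #Ω := by omega
  have heigen : ∀ m ∈ Icc 1 #Ω, IsDirichletEigenfunction n Ω V ρ (lam m) (u m) :=
    fun m hm => ⟨hu0 m hm, heig m hm⟩
  have hi : IsDirichletEigenfunction n Ω V ρ (lam i) (u i) := heigen i (mem_Icc.2 ⟨hi1, by omega⟩)
  constructor
  · rw [sum_phi_mul_gam_eq, ← two_mul_sum_aCoef_mul_bCoef hi
      fun m hm => heigen m (Icc_subset_Icc_right hkN hm)]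
    ring
  · have htail : ∑ x ∈ Ω, phi n Ω ρ u α k i x * gam n (coord α) (u i) x * deg n
        = ∑ m ∈ Icc 1 #Ω \ Icc 1 k, aCoef n Ω ρ u α i m * bCoef n Ω u α i m := by
      rw [← sum_sum_mul_gam_eq_sum_mul_bCoef]
      exact sum_congr rfl fun x hx => by rw [phi_eq_sum_sdiff horth hkN hx]
    rw [htail, neg_mul, two_mul_sum_aCoef_mul_bCoef hi fun m hm => heigen m (sdiff_subset hm),
      neg_nonneg]
    refine sum_nonpos fun m hm => mul_nonpos_of_nonpos_of_nonneg ?_ (sq_nonneg _)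
    simp only [mem_sdiff, mem_Icc] at hm
    exact sub_nonpos.2 (hmono i m hi1 (by omega) hm.1.2)

/-- The identity
`-2 ∑ φᵢ Γ(g,uᵢ) d_x = -2 ∑ g uᵢ Γ(g,uᵢ) d_x + ∑ⱼ (λᵢ - λⱼ) aᵢⱼ²`,
and this quantity is nonnegative. -/
theorem phi_gamma_identity_and_nonneg (n : ℕ) (hn : 0 < n) (Ω : Finset (Fin n → ℤ)) (hne : Ω.Nonempty)
    (V ρ : (Fin n → ℤ) → ℝ)
    (hV : ∀ x ∈ Ω, 0 ≤ V x) (hρ : ∀ x ∈ Ω, 0 < ρ x)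
    (lam : ℕ → ℝ) (u : ℕ → (Fin n → ℤ) → ℝ)
    (hu0 : ∀ i ∈ Finset.Icc 1 Ω.card, ∀ x ∉ Ω, u i x = 0)
    (heig : ∀ i ∈ Finset.Icc 1 Ω.card, ∀ x ∈ Ω,
      -(lap n (u i) x) + V x * u i x = lam i * ρ x * u i x)
    (horth : ∀ i ∈ Finset.Icc 1 Ω.card, ∀ j ∈ Finset.Icc 1 Ω.card,
      ∑ x ∈ Ω, u i x * u j x * ρ x * deg n = if i = j then 1 else 0)
    (hmono : ∀ i j : ℕ, 1 ≤ i → i ≤ j → j ≤ Ω.card → lam i ≤ lam j)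
    (hpos : 0 < lam 1)
    (k : ℕ) (hk1 : 1 ≤ k) (hk2 : k ≤ Ω.card - 1)
    (α : Fin n) (i : ℕ) (hi1 : 1 ≤ i) (hik : i ≤ k) :
    (-2 * ∑ x ∈ Ω, phi n Ω ρ u α k i x * gam n (coord α) (u i) x * deg n
        = -2 * ∑ x ∈ Ω, coord α x * u i x * gam n (coord α) (u i) x * deg n
          + ∑ j ∈ Finset.Icc 1 k, (lam i - lam j) * (aCoef n Ω ρ u α i j) ^ 2)
    ∧ 0 ≤ -2 * ∑ x ∈ Ω, phi n Ω ρ u α k i x * gam n (coord α) (u i) x * deg n :=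
  phi_gamma_identity_and_nonneg_general n Ω V ρ lam u hu0 heig horth hmono k hk2 α i hi1 hik
end
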